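/- For a linear program minimizing a linear objective over probability vectors θ ∈ ℝⁿ subject to κ linear inequality constraints Σⱼ θⱼ·r_k(xⱼ) ≤ ε_k (k = 1,…,κ), if the feasible set is nonempty then there exists an optimal solution supported on at most κ+1 points. -/
import Mathlib

open Finset

theorem lp_kappa_plus_one_support (n κ : ℕ) (q : Fin n → ℝ)
    (r : Fin κ → Fin n → ℝ) (ε : Fin κ → ℝ)
    (hfeas : ∃ θ : Fin n → ℝ, (∀ j, 0 ≤ θ j) ∧ (∑ j, θ j = 1) ∧
      ∀ k, ∑ j, θ j * r k j ≤ ε k) :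
    ∃ θ : Fin n → ℝ, (∀ j, 0 ≤ θ j) ∧ (∑ j, θ j = 1) ∧
      (∀ k, ∑ j, θ j * r k j ≤ ε k) ∧
      (∀ θ' : Fin n → ℝ, (∀ j, 0 ≤ θ' j) → (∑ j, θ' j = 1) →
        (∀ k, ∑ j, θ' j * r k j ≤ ε k) → ∑ j, θ j * q j ≤ ∑ j, θ' j * q j) ∧
      (Finset.univ.filter fun j => 0 < θ j).card ≤ κ + 1 := by
  classical
  obtain ⟨θ₀, hθ₀⟩ := hfeas
  set S : Set (Fin n → ℝ) :=
    {θ | (∀ j, 0 ≤ θ j) ∧ (∑ j, θ j = 1) ∧ ∀ k, ∑ j, θ j * r k j ≤ ε k} with hSdef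
  set obj : (Fin n → ℝ) → ℝ := fun θ => ∑ j, θ j * q j with hobj
  have hcont : Continuous obj := by
    apply continuous_finset_sum
    intro j _
    exact (continuous_apply j).mul continuous_const
  have hclosed : IsClosed S := by
    have h1 : IsClosed {θ : Fin n → ℝ | ∀ j, 0 ≤ θ j} := by
      have : {θ : Fin n → ℝ | ∀ j, 0 ≤ θ j} = ⋂ j, {θ | 0 ≤ θ j} := by
        ext θ; simp
      rw [this]
      exact isClosed_iInter fun j => isClosed_le continuous_const (continuous_apply j)
    have h2 : IsClosed {θ : Fin n → ℝ | ∑ j, θ j = 1} :=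
      isClosed_eq (continuous_finset_sum _ fun j _ => continuous_apply j) continuous_const
    have h3 : IsClosed {θ : Fin n → ℝ | ∀ k, ∑ j, θ j * r k j ≤ ε k} := by
      have : {θ : Fin n → ℝ | ∀ k, ∑ j, θ j * r k j ≤ ε k}
          = ⋂ k, {θ | ∑ j, θ j * r k j ≤ ε k} := by ext θ; simp
      rw [this]
      exact isClosed_iInter fun k => isClosed_le
        (continuous_finset_sum _ fun j _ => (continuous_apply j).mul continuous_const)
        continuous_const
    have hexp : S = {θ : Fin n → ℝ | ∀ j, 0 ≤ θ j} ∩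
        ({θ | ∑ j, θ j = 1} ∩ {θ | ∀ k, ∑ j, θ j * r k j ≤ ε k}) := by
      ext θ; simp only [hSdef, Set.mem_setOf_eq, Set.mem_inter_iff, and_assoc]
    rw [hexp]; exact h1.inter (h2.inter h3)
  have hsub : S ⊆ Set.Icc 0 1 := by
    intro θ hθ
    refine ⟨fun j => hθ.1 j, fun j => ?_⟩
    calc θ j ≤ ∑ i, θ i := Finset.single_le_sum (fun i _ => hθ.1 i) (mem_univ j)
    _ = 1 := hθ.2.1
  have hScpt : IsCompact S := (isCompact_Icc).of_isClosed_subset hclosed hsub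
  obtain ⟨θm, hθmS, hmin⟩ := hScpt.exists_isMinOn ⟨θ₀, hθ₀⟩ hcont.continuousOn
  have key : ∀ m : ℕ, ∀ θ : Fin n → ℝ, θ ∈ S → (∀ θ' ∈ S, obj θ ≤ obj θ') →
      (Finset.univ.filter fun j => 0 < θ j).card ≤ m →
      ∃ θ'' : Fin n → ℝ, θ'' ∈ S ∧ (∀ θ' ∈ S, obj θ'' ≤ obj θ') ∧
        (Finset.univ.filter fun j => 0 < θ'' j).card ≤ κ + 1 := by
    intro m
    induction m with
    | zero => intro θ hθS hθopt hc; exact ⟨θ, hθS, hθopt, by omega⟩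
    | succ m ih =>
      intro θ hθS hθopt hc
      by_cases hle : (Finset.univ.filter fun j => 0 < θ j).card ≤ κ + 1
      · exact ⟨θ, hθS, hθopt, hle⟩
      · push_neg at hle
        obtain ⟨hθnn, hθsum, hθcon⟩ := hθS
        set s : Finset (Fin n) := Finset.univ.filter fun j => 0 < θ j with hsdef
        have hθpos : ∀ j ∈ s, 0 < θ j := fun j hj => (Finset.mem_filter.mp hj).2
        -- linear dependence among the (1, r · j) for j in the support
        set v : Fin n → ℝ × (Fin κ → ℝ) := fun j => (1, fun k => r k j) with hvdef
        set L : ((↥s) → ℝ) →ₗ[ℝ] ℝ × (Fin κ → ℝ) :=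
          ∑ i : ↥s, (LinearMap.proj i).smulRight (v i) with hLdef
        have hLapp : ∀ c : (↥s) → ℝ, L c = ∑ i : ↥s, c i • v (i : Fin n) := by
          intro c
          simp [hLdef, LinearMap.sum_apply, LinearMap.smulRight_apply, LinearMap.proj_apply]
        have hninj : ¬ Function.Injective L := by
          intro hinj
          have hfr := LinearMap.finrank_le_finrank_of_injective hinj
          simp only [Module.finrank_pi, Module.finrank_prod, Module.finrank_self,
            Fintype.card_coe, Fintype.card_fin] at hfr
          omega
        obtain ⟨a, b, hab, hne⟩ := Function.not_injective_iff.mp hninj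
        set c : (↥s) → ℝ := a - b with hcdef
        have hc0 : c ≠ 0 := sub_ne_zero.mpr hne
        have hLc : (∑ i : ↥s, c i • v (i : Fin n)) = 0 := by
          rw [← hLapp, hcdef, map_sub, hab, sub_self]
        have hc1 : ∑ i : ↥s, c i = 0 := by
          have h := congrArg Prod.fst hLc
          simpa [Prod.fst_sum, hvdef, smul_eq_mul] using h
        have hc2 : ∀ k, ∑ i : ↥s, c i * r k (i : Fin n) = 0 := by
          intro k
          have h := congrArg Prod.snd hLc
          have h3 := congrFun h k
          simpa [Prod.snd_sum, Finset.sum_apply, hvdef, smul_eq_mul] using h3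
        set d : Fin n → ℝ := fun j => if h : j ∈ s then c ⟨j, h⟩ else 0 with hddef
        have hd_mem : ∀ j, d j ≠ 0 → j ∈ s := by
          intro j hj
          by_contra h
          exact hj (by simp [hddef, h])
        have hattach : ∀ f : Fin n → ℝ, ∑ j, d j * f j = ∑ i : ↥s, c i * f (i : Fin n) := by
          intro f
          rw [← Finset.sum_subset (Finset.subset_univ s)
            (fun x _ hx => by simp [hddef, hx])]
          rw [← Finset.sum_attach s (fun j => d j * f j)]
          rw [Finset.univ_eq_attach]
          refine Finset.sum_congr rfl fun i _ => ?_
          simp [hddef]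
        have hdsum : ∑ j, d j = 0 := by
          have h := hattach (fun _ => 1)
          simp only [mul_one] at h
          rw [h, hc1]
        have hdr : ∀ k, ∑ j, d j * r k j = 0 := by
          intro k
          rw [hattach (fun j => r k j), hc2 k]
        obtain ⟨i0, hi0⟩ := Function.ne_iff.mp hc0
        have hdne : ∃ j, d j ≠ 0 := ⟨i0, by simpa [hddef, i0.2] using hi0⟩
        have hpos_of : ∀ e : Fin n → ℝ, (∑ j, e j = 0) → (∃ j, e j ≠ 0) → ∃ j, 0 < e j := by
          rintro e hsum ⟨j1, hj1⟩
          by_contra h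
          push_neg at h
          exact hj1 ((Finset.sum_eq_zero_iff_of_nonpos (fun j _ => h j)).mp hsum j1
            (mem_univ j1))
        obtain ⟨e, he_mem, he_sum, he_r, he_q, he_pos⟩ :
            ∃ e : Fin n → ℝ, (∀ j, e j ≠ 0 → j ∈ s) ∧ (∑ j, e j = 0) ∧
              (∀ k, ∑ j, e j * r k j = 0) ∧ (0 ≤ ∑ j, e j * q j) ∧ (∃ j, 0 < e j) := by
          rcases le_or_gt 0 (∑ j, d j * q j) with h | h
          · exact ⟨d, hd_mem, hdsum, hdr, h, hpos_of d hdsum hdne⟩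
          · refine ⟨-d, ?_, ?_, ?_, ?_, ?_⟩
            · intro j hj; exact hd_mem j (by simpa using hj)
            · simp [hdsum]
            · intro k
              have := hdr k
              simp only [Pi.neg_apply, neg_mul, Finset.sum_neg_distrib]
              rw [this, neg_zero]
            · have heq : ∑ j, (-d) j * q j = -∑ j, d j * q j := by
                simp [neg_mul, Finset.sum_neg_distrib]
              rw [heq]; linarith
            · refine hpos_of _ (by simp [hdsum]) ?_
              obtain ⟨j1, hj1⟩ := hdne
              exact ⟨j1, by simpa using hj1⟩
        set T : Finset (Fin n) := Finset.univ.filter fun j => 0 < e j with hTdef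
        obtain ⟨jp, hjp⟩ := he_pos
        have hTne : T.Nonempty := ⟨jp, by simp [hTdef, hjp]⟩
        obtain ⟨j0, hj0T, hj0min⟩ := Finset.exists_min_image T (fun j => θ j / e j) hTne
        have hej0 : 0 < e j0 := by
          have := Finset.mem_filter.mp hj0T
          exact this.2
        have hj0s : j0 ∈ s := he_mem j0 (ne_of_gt hej0)
        have hθj0 : 0 < θ j0 := hθpos j0 hj0s
        set t : ℝ := θ j0 / e j0 with htdef
        have ht0 : 0 ≤ t := div_nonneg hθj0.le hej0.le
        have hkey : ∀ j, 0 < e j → t * e j ≤ θ j := by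
          intro j hj
          have hle' := hj0min j (by simp [hTdef, hj])
          rw [le_div_iff₀ hj] at hle'
          exact hle'
        set θ₂ : Fin n → ℝ := fun j => θ j - t * e j with hθ₂def
        have hθ₂nn : ∀ j, 0 ≤ θ₂ j := by
          intro j
          rcases le_or_gt (e j) 0 with h | h
          · have h1 : t * e j ≤ 0 := mul_nonpos_of_nonneg_of_nonpos ht0 h
            have h2 := hθnn j
            simp only [hθ₂def]
            linarith
          · have := hkey j h
            simp only [hθ₂def]
            linarith
        have hθ₂sum : ∑ j, θ₂ j = 1 := by
          simp only [hθ₂def]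
          rw [Finset.sum_sub_distrib, ← Finset.mul_sum, he_sum, hθsum]
          ring
        have hθ₂con : ∀ k, ∑ j, θ₂ j * r k j ≤ ε k := by
          intro k
          have heq : ∑ j, θ₂ j * r k j = ∑ j, θ j * r k j - t * ∑ j, e j * r k j := by
            rw [Finset.mul_sum, ← Finset.sum_sub_distrib]
            exact Finset.sum_congr rfl fun j _ => by simp only [hθ₂def]; ring
          rw [heq, he_r k]
          simpa using hθcon k
        have hθ₂obj : obj θ₂ ≤ obj θ := by
          have heq : obj θ₂ = obj θ - t * ∑ j, e j * q j := by
            simp only [hobj]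
            rw [Finset.mul_sum, ← Finset.sum_sub_distrib]
            exact Finset.sum_congr rfl fun j _ => by simp only [hθ₂def]; ring
          rw [heq]
          nlinarith [mul_nonneg ht0 he_q]
        have hθ₂S : θ₂ ∈ S := ⟨hθ₂nn, hθ₂sum, hθ₂con⟩
        have hθ₂opt : ∀ θ' ∈ S, obj θ₂ ≤ obj θ' := fun θ' hθ' => hθ₂obj.trans (hθopt θ' hθ')
        have hsub2 : (Finset.univ.filter fun j => 0 < θ₂ j) ⊆ s := by
          intro j hj
          have hj2 : 0 < θ₂ j := (Finset.mem_filter.mp hj).2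
          by_contra hjs
          have hθj : θ j = 0 := by
            have : ¬ 0 < θ j := by
              intro hpos
              exact hjs (Finset.mem_filter.mpr ⟨mem_univ j, hpos⟩)
            have := hθnn j
            linarith [lt_or_ge 0 (θ j)]
          have hej : e j = 0 := by
            by_contra he
            exact hjs (he_mem j he)
          simp only [hθ₂def, hθj, hej, mul_zero, sub_zero] at hj2
          exact lt_irrefl 0 hj2
        have hj0notin : j0 ∉ (Finset.univ.filter fun j => 0 < θ₂ j) := by
          simp only [Finset.mem_filter, mem_univ, true_and, not_lt]
          have : θ₂ j0 = 0 := by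
            simp only [hθ₂def, htdef]
            rw [div_mul_cancel₀ _ (ne_of_gt hej0), sub_self]
          rw [this]
        have hlt : (Finset.univ.filter fun j => 0 < θ₂ j).card < s.card :=
          Finset.card_lt_card ((Finset.ssubset_iff_of_subset hsub2).mpr
            ⟨j0, hj0s, hj0notin⟩)
        exact ih θ₂ hθ₂S hθ₂opt (by omega)
  have hmin' : ∀ θ' ∈ S, obj θm ≤ obj θ' := fun θ' h => isMinOn_iff.mp hmin θ' h
  have hcardn : (Finset.univ.filter fun j => 0 < θm j).card ≤ n :=
    le_trans (Finset.card_filter_le _ _) (by simp)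
  obtain ⟨θf, hθfS, hθfopt, hθfcard⟩ := key n θm hθmS hmin' hcardn
  obtain ⟨h1, h2, h3⟩ := hθfS
  exact ⟨θf, h1, h2, h3, fun θ' a b c => hθfopt θ' ⟨a, b, c⟩, hθfcard⟩
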